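/- Let m ≥ 14 be an integer with m ≢ 2 (mod 3). Then there exist nonnegative integers ℓ1 and ℓ2 such that the form F(x,y) = ∑_{i=1}^{ℓ1} P_m(x_i) + 3·∑_{j=1}^{ℓ2} P_m(y_j) represents every positive integer n ≤ 3m - 13 but is not universal. (This shows that the minimal universality-testing constant γ_m satisfies γ_m ≥ 3m - 12.) -/
import Mathlib


/-- The `x`-th generalized `m`-gonal number `P_m(x) = ((m-2)x² - (m-4)x)/2`. -/
def polygonal (m : ℕ) (x : ℤ) : ℤ := (((m : ℤ) - 2) * x ^ 2 - ((m : ℤ) - 4) * x) / 2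

lemma polygonal_eq (m : ℕ) (x : ℤ) :
    ∃ c : ℤ, x ^ 2 - x = 2 * c ∧ polygonal m x = ((m : ℤ) - 2) * c + x := by
  obtain ⟨c, hc⟩ := Int.even_mul_succ_self (x - 1)
  have h2 : x ^ 2 - x = 2 * c := by linear_combination hc
  refine ⟨c, h2, ?_⟩
  have key : ((m : ℤ) - 2) * x ^ 2 - ((m : ℤ) - 4) * x = 2 * (((m : ℤ) - 2) * c + x) := by
    linear_combination ((m : ℤ) - 2) * h2
  rw [polygonal, key, Int.mul_ediv_cancel_left _ two_ne_zero]

lemma polygonal_zero (m : ℕ) : polygonal m 0 = 0 := by simp [polygonal]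

lemma polygonal_one (m : ℕ) : polygonal m 1 = 1 := by
  have h : ((m : ℤ) - 2) * 1 ^ 2 - ((m : ℤ) - 4) * 1 = 2 := by ring
  rw [polygonal, h]; norm_num

lemma polygonal_nonneg (m : ℕ) (hm : 14 ≤ m) (x : ℤ) : 0 ≤ polygonal m x := by
  obtain ⟨c, hc, hp⟩ := polygonal_eq m x
  have hm' : (14 : ℤ) ≤ (m : ℤ) := by exact_mod_cast hm
  have hc' : ((m : ℤ) - 2) * (x ^ 2 - x) = ((m : ℤ) - 2) * (2 * c) := by rw [hc]
  rcases le_or_gt 0 x with h | h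
  · nlinarith [hc', mul_nonneg (show (0:ℤ) ≤ (m:ℤ) - 2 by linarith)
      (show (0:ℤ) ≤ x * (x - 1) by rcases le_or_gt 1 x with h' | h' <;> nlinarith)]
  · have hx1 : x ≤ -1 := by omega
    nlinarith [hc', mul_nonneg (show (0:ℤ) ≤ (m:ℤ) - 2 by linarith)
      (show (0:ℤ) ≤ x * (x + 1) by nlinarith),
      mul_nonneg (show (0:ℤ) ≤ (m:ℤ) - 3 by linarith) (show (0:ℤ) ≤ -x - 1 by linarith)]

/-- If `x ∉ {0,1}`, then `P_m(x) ≥ m - 3`. -/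
lemma polygonal_ge (m : ℕ) (hm : 14 ≤ m) (x : ℤ) (h0 : x ≠ 0) (h1 : x ≠ 1) :
    (m : ℤ) - 3 ≤ polygonal m x := by
  obtain ⟨c, hc, hp⟩ := polygonal_eq m x
  have hm' : (14 : ℤ) ≤ (m : ℤ) := by exact_mod_cast hm
  have hc' : ((m : ℤ) - 2) * (x ^ 2 - x) = ((m : ℤ) - 2) * (2 * c) := by rw [hc]
  have hx : x ≤ -1 ∨ 2 ≤ x := by omega
  rcases hx with h | h
  · nlinarith [hc', mul_nonneg (show (0:ℤ) ≤ (m:ℤ) - 2 by linarith)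
      (show (0:ℤ) ≤ x * (x + 1) by nlinarith),
      mul_nonneg (show (0:ℤ) ≤ (m:ℤ) - 3 by linarith) (show (0:ℤ) ≤ -x - 1 by linarith)]
  · nlinarith [hc', mul_nonneg (show (0:ℤ) ≤ (m:ℤ) - 2 by linarith)
      (show (0:ℤ) ≤ (x - 2) * (x + 1) by nlinarith)]

/-- If `3 ∣ x` and `x ≠ 0`, then `P_m(x) ≥ 3m - 3`. -/
lemma polygonal_ge_of_three_dvd (m : ℕ) (hm : 14 ≤ m) (x : ℤ) (hd : (3:ℤ) ∣ x) (h0 : x ≠ 0) :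
    3 * (m : ℤ) - 3 ≤ polygonal m x := by
  obtain ⟨c, hc, hp⟩ := polygonal_eq m x
  have hm' : (14 : ℤ) ≤ (m : ℤ) := by exact_mod_cast hm
  have hc' : ((m : ℤ) - 2) * (x ^ 2 - x) = ((m : ℤ) - 2) * (2 * c) := by rw [hc]
  have hx : x ≤ -3 ∨ 3 ≤ x := by omega
  rcases hx with h | h
  · have hA : (0:ℤ) ≤ -(((m:ℤ) - 2) * x + 2 * (m:ℤ) - 2) := by
      nlinarith [mul_nonneg (show (0:ℤ) ≤ (m:ℤ) - 2 by linarith) (show (0:ℤ) ≤ -x - 3 by linarith)]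
    nlinarith [hc', mul_nonneg (show (0:ℤ) ≤ -(x - 3) by linarith) hA]
  · have hA : (0:ℤ) ≤ ((m:ℤ) - 2) * x + 2 * (m:ℤ) - 2 := by
      nlinarith [mul_nonneg (show (0:ℤ) ≤ (m:ℤ) - 2 by linarith) (show (0:ℤ) ≤ x - 3 by linarith)]
    nlinarith [hc', mul_nonneg (show (0:ℤ) ≤ x - 3 by linarith) hA]

/-- If `x ≡ 1 (mod 3)` and `x ≠ 1`, then `P_m(x) ≥ 3m - 8`. -/
lemma polygonal_ge_of_one_mod_three (m : ℕ) (hm : 14 ≤ m) (x : ℤ) (hd : (3:ℤ) ∣ (x - 1))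
    (h1 : x ≠ 1) : 3 * (m : ℤ) - 8 ≤ polygonal m x := by
  obtain ⟨c, hc, hp⟩ := polygonal_eq m x
  have hm' : (14 : ℤ) ≤ (m : ℤ) := by exact_mod_cast hm
  have hc' : ((m : ℤ) - 2) * (x ^ 2 - x) = ((m : ℤ) - 2) * (2 * c) := by rw [hc]
  have hx : x ≤ -2 ∨ 4 ≤ x := by omega
  rcases hx with h | h
  · have hA : (0:ℤ) ≤ -(((m:ℤ) - 2) * x - 3 * (m:ℤ) + 8) := by
      nlinarith [mul_nonneg (show (0:ℤ) ≤ (m:ℤ) - 2 by linarith) (show (0:ℤ) ≤ -x - 2 by linarith)]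
    nlinarith [hc', mul_nonneg (show (0:ℤ) ≤ -(x + 2) by linarith) hA]
  · have hA : (0:ℤ) ≤ ((m:ℤ) - 2) * x - 3 * (m:ℤ) + 8 := by
      nlinarith [mul_nonneg (show (0:ℤ) ≤ (m:ℤ) - 2 by linarith) (show (0:ℤ) ≤ x - 4 by linarith)]
    nlinarith [hc', mul_nonneg (show (0:ℤ) ≤ x + 2 by linarith) hA]

/-- The inner sum with `m - 5` variables cannot equal `m - 4`. -/
lemma sum_ne (m : ℕ) (hm : 14 ≤ m) (y : Fin (m - 5) → ℤ) :
    ∑ j, polygonal m (y j) ≠ (m : ℤ) - 4 := by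
  intro hT
  have hm' : (14 : ℤ) ≤ (m : ℤ) := by exact_mod_cast hm
  by_cases hall : ∀ j, y j = 0 ∨ y j = 1
  · have hle : ∑ j, polygonal m (y j) ≤ ∑ _j : Fin (m - 5), (1 : ℤ) := by
      refine Finset.sum_le_sum fun j _ => ?_
      rcases hall j with h | h <;> simp [h, polygonal_zero, polygonal_one]
    have hcard : ∑ _j : Fin (m - 5), (1 : ℤ) = ((m - 5 : ℕ) : ℤ) := by
      simp
    have hc5 : ((m - 5 : ℕ) : ℤ) = (m : ℤ) - 5 := by omega
    rw [hT, hcard, hc5] at hle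
    linarith
  · push_neg at hall
    obtain ⟨j0, h0, h1⟩ := hall
    have hbig := polygonal_ge m hm (y j0) h0 h1
    have hsingle : polygonal m (y j0) ≤ ∑ j, polygonal m (y j) :=
      Finset.single_le_sum (fun j _ => polygonal_nonneg m hm (y j)) (Finset.mem_univ j0)
    rw [hT] at hsingle
    linarith

lemma sum_ite_count (ℓ k : ℕ) (hk : k ≤ ℓ) :
    ∑ i : Fin ℓ, (if (i : ℕ) < k then (1 : ℤ) else 0) = (k : ℤ) := by
  rw [Fin.sum_univ_eq_sum_range (fun i => if i < k then (1 : ℤ) else 0) ℓ]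
  rw [Finset.sum_ite, Finset.sum_const, Finset.sum_const_zero]
  have : Finset.filter (fun i => i < k) (Finset.range ℓ) = Finset.range k := by
    ext i; simp only [Finset.mem_filter, Finset.mem_range]; omega
  simp [this]

theorem gamma_lower_bound_of_not_two_mod_three (m : ℕ) (hm : 14 ≤ m) (hm3 : m % 3 ≠ 2) :
    ∃ ℓ₁ ℓ₂ : ℕ,
      (∀ n : ℕ, 0 < n → n ≤ 3 * m - 13 →
          ∃ (x : Fin ℓ₁ → ℤ) (y : Fin ℓ₂ → ℤ),
            ∑ i, polygonal m (x i) + 3 * ∑ j, polygonal m (y j) = (n : ℤ)) ∧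
        ¬ ∀ n : ℕ, 0 < n →
            ∃ (x : Fin ℓ₁ → ℤ) (y : Fin ℓ₂ → ℤ),
              ∑ i, polygonal m (x i) + 3 * ∑ j, polygonal m (y j) = (n : ℤ) := by
  refine ⟨2, m - 5, ?_, ?_⟩
  · -- positive part: represent every `0 < n ≤ 3m - 13`
    intro n hn hn2
    refine ⟨fun i => if (i : ℕ) < n % 3 then 1 else 0,
            fun j => if (j : ℕ) < n / 3 then 1 else 0, ?_⟩
    have hx : ∑ i : Fin 2, polygonal m (if (i : ℕ) < n % 3 then 1 else 0) = ((n % 3 : ℕ) : ℤ) := by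
      simp only [apply_ite (polygonal m), polygonal_zero, polygonal_one]
      exact sum_ite_count 2 (n % 3) (by omega)
    have hy : ∑ j : Fin (m - 5), polygonal m (if (j : ℕ) < n / 3 then 1 else 0)
        = ((n / 3 : ℕ) : ℤ) := by
      simp only [apply_ite (polygonal m), polygonal_zero, polygonal_one]
      exact sum_ite_count (m - 5) (n / 3) (by omega)
    rw [hx, hy]
    omega
  · -- negative part: the form is not universal
    intro hU
    have hm' : (14 : ℤ) ≤ (m : ℤ) := by exact_mod_cast hm
    have h3 : m % 3 = 0 ∨ m % 3 = 1 := by omega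
    rcases h3 with h3 | h3
    · -- m ≡ 0 (mod 3): the value 3m - 10 is not represented
      obtain ⟨x, y, hxy⟩ := hU (3 * m - 10) (by omega)
      rw [Fin.sum_univ_two] at hxy
      obtain ⟨c0, hc0, hp0⟩ := polygonal_eq m (x 0)
      obtain ⟨c1, hc1, hp1⟩ := polygonal_eq m (x 1)
      set T := ∑ j, polygonal m (y j) with hTdef
      have hT0 : 0 ≤ T := Finset.sum_nonneg fun j _ => polygonal_nonneg m hm (y j)
      have hNcast : ((3 * m - 10 : ℕ) : ℤ) = 3 * (m : ℤ) - 10 := by omega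
      rw [hNcast] at hxy
      have E : ((m : ℤ) - 2) * c0 + x 0 + (((m : ℤ) - 2) * c1 + x 1) + 3 * T
          = 3 * (m : ℤ) - 10 := by rw [← hp0, ← hp1]; linarith [hxy]
      have hmz : ((m : ℕ) : ZMod 3) = 0 :=
        (ZMod.natCast_eq_zero_iff m 3).mpr (by omega)
      have E3 := congrArg (fun z : ℤ => (z : ZMod 3)) E
      have H0 := congrArg (fun z : ℤ => (z : ZMod 3)) hc0
      have H1 := congrArg (fun z : ℤ => (z : ZMod 3)) hc1
      push_cast at E3 H0 H1
      rw [hmz] at E3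
      have key : ∀ u v cu cv t : ZMod 3, u ^ 2 - u = 2 * cu → v ^ 2 - v = 2 * cv →
          (0 - 2) * cu + u + ((0 - 2) * cv + v) + 3 * t = 3 * 0 - 10 →
          u = 1 ∧ v = 1 := by decide
      obtain ⟨hu, hv⟩ := key _ _ _ _ _ H0 H1 E3
      have hd0 : (3 : ℤ) ∣ (x 0 - 1) := by
        have : ((x 0 - 1 : ℤ) : ZMod 3) = 0 := by push_cast [hu]; ring
        exact (ZMod.intCast_zmod_eq_zero_iff_dvd _ 3).mp this
      have hd1 : (3 : ℤ) ∣ (x 1 - 1) := by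
        have : ((x 1 - 1 : ℤ) : ZMod 3) = 0 := by push_cast [hv]; ring
        exact (ZMod.intCast_zmod_eq_zero_iff_dvd _ 3).mp this
      have hx0 : x 0 = 1 := by
        by_contra h
        have := polygonal_ge_of_one_mod_three m hm (x 0) hd0 h
        have h1n := polygonal_nonneg m hm (x 1)
        linarith
      have hx1 : x 1 = 1 := by
        by_contra h
        have := polygonal_ge_of_one_mod_three m hm (x 1) hd1 h
        have h0n := polygonal_nonneg m hm (x 0)
        linarith
      rw [hx0, hx1, polygonal_one] at hxy
      exact sum_ne m hm y (by linarith)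
    · -- m ≡ 1 (mod 3): the value 3m - 12 is not represented
      obtain ⟨x, y, hxy⟩ := hU (3 * m - 12) (by omega)
      rw [Fin.sum_univ_two] at hxy
      obtain ⟨c0, hc0, hp0⟩ := polygonal_eq m (x 0)
      obtain ⟨c1, hc1, hp1⟩ := polygonal_eq m (x 1)
      set T := ∑ j, polygonal m (y j) with hTdef
      have hT0 : 0 ≤ T := Finset.sum_nonneg fun j _ => polygonal_nonneg m hm (y j)
      have hNcast : ((3 * m - 12 : ℕ) : ℤ) = 3 * (m : ℤ) - 12 := by omega
      rw [hNcast] at hxy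
      have E : ((m : ℤ) - 2) * c0 + x 0 + (((m : ℤ) - 2) * c1 + x 1) + 3 * T
          = 3 * (m : ℤ) - 12 := by rw [← hp0, ← hp1]; linarith [hxy]
      have hmz : ((m : ℕ) : ZMod 3) = 1 := by
        have h := (ZMod.intCast_zmod_eq_zero_iff_dvd ((m : ℤ) - 1) 3).mpr (by omega)
        push_cast at h
        exact sub_eq_zero.mp h
      have E3 := congrArg (fun z : ℤ => (z : ZMod 3)) E
      have H0 := congrArg (fun z : ℤ => (z : ZMod 3)) hc0
      have H1 := congrArg (fun z : ℤ => (z : ZMod 3)) hc1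
      push_cast at E3 H0 H1
      rw [hmz] at E3
      have key : ∀ u v cu cv t : ZMod 3, u ^ 2 - u = 2 * cu → v ^ 2 - v = 2 * cv →
          (1 - 2) * cu + u + ((1 - 2) * cv + v) + 3 * t = 3 * 1 - 12 →
          u = 0 ∧ v = 0 := by decide
      obtain ⟨hu, hv⟩ := key _ _ _ _ _ H0 H1 E3
      have hd0 : (3 : ℤ) ∣ x 0 := (ZMod.intCast_zmod_eq_zero_iff_dvd _ 3).mp hu
      have hd1 : (3 : ℤ) ∣ x 1 := (ZMod.intCast_zmod_eq_zero_iff_dvd _ 3).mp hv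
      have hx0 : x 0 = 0 := by
        by_contra h
        have := polygonal_ge_of_three_dvd m hm (x 0) hd0 h
        have h1n := polygonal_nonneg m hm (x 1)
        linarith
      have hx1 : x 1 = 0 := by
        by_contra h
        have := polygonal_ge_of_three_dvd m hm (x 1) hd1 h
        have h0n := polygonal_nonneg m hm (x 0)
        linarith
      rw [hx0, hx1, polygonal_zero] at hxy
      exact sum_ne m hm y (by linarith)
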